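/- arXiv:1909.06237 — 3 statements merged into one kernel-verified Lean document; each statement's English description precedes it below -/
import Mathlib

section
/- Let G be a group, k an infinite cardinal, {N_α}_{α<k} a G-invariant k-small system on G, and S a G-invariant k-additive algebra of subsets of G that is admissible with respect to {N_α}_{α<k}. Let N_∞ = ⋂_{α<k} N_α and let S̃ denote the G-invariant k-additive algebra of subsets of G generated by S together with N_∞. Then the pair (S̃, N_∞) is a G-invariant k-additive measurable structure on G which is k⁺-saturated, i.e., every family of pairwise disjoint sets belonging to S̃ \ N_∞ has cardinality at most k. -/
open Set Pointwise

universe u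

/-- A class of subsets of a group `G` is `G`-invariant if it is closed under
left translations `A ↦ g • A = {g * x : x ∈ A}`. -/
def GInvariant {G : Type u} [Group G] (C : Set (Set G)) : Prop :=
  ∀ g : G, ∀ A ∈ C, g • A ∈ C

/-- A class of subsets is `k`-additive if it is closed under unions of
at most `k` of its members. -/
def kAdditive {G : Type u} (k : Cardinal.{u}) (C : Set (Set G)) : Prop :=
  ∀ (ι : Type u) (f : ι → Set G), Cardinal.mk ι ≤ k → (∀ i, f i ∈ C) → (⋃ i, f i) ∈ C

/-- An algebra of subsets: contains `∅`, closed under complements and finite unions. -/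
structure IsSetAlgebra {G : Type u} (S : Set (Set G)) : Prop where
  empty_mem : ∅ ∈ S
  compl_mem : ∀ A ∈ S, Aᶜ ∈ S
  union_mem : ∀ A ∈ S, ∀ B ∈ S, A ∪ B ∈ S

/-- `N_∞ = ⋂_{α<k} N_α`. -/
def NInf {G : Type u} (k : Cardinal.{u}) (N : Ordinal.{u} → Set (Set G)) : Set (Set G) :=
  {A | ∀ α < k.ord, A ∈ N α}

/-- A `G`-invariant `k`-small system on `G` (Definition 1.2). -/
structure SmallSystem {G : Type u} [Group G] (k : Cardinal.{u})
    (N : Ordinal.{u} → Set (Set G)) : Prop where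
  nonempty : ∀ α < k.ord, (N α).Nonempty
  empty_mem : ∀ α < k.ord, (∅ : Set G) ∈ N α
  invariant : ∀ α < k.ord, GInvariant (N α)
  downward : ∀ α < k.ord, ∀ E ∈ N α, ∀ F, F ⊆ E → F ∈ N α
  union_ninf : ∀ α < k.ord, ∀ E ∈ N α, ∀ F ∈ NInf k N, E ∪ F ∈ N α
  union_tail : ∀ α < k.ord, ∃ αs, α < αs ∧ αs < k.ord ∧
    ∀ (T : Set Ordinal.{u}) (E : Ordinal.{u} → Set G),
      (∀ β ∈ T, αs < β ∧ β < k.ord) → Set.InjOn E T →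
      (∀ β ∈ T, E β ∈ N β) → (⋃ β ∈ T, E β) ∈ N α
  directed : ∀ α < k.ord, ∀ β < k.ord, ∃ γ, α < γ ∧ β < γ ∧ γ < k.ord ∧
    N γ ⊆ N α ∧ N γ ⊆ N β

/-- Admissibility of a `G`-invariant `k`-additive algebra with respect to a
`k`-small system (Definition 1.3). -/
def Admissible {G : Type u} [Group G] (k : Cardinal.{u}) (S : Set (Set G))
    (N : Ordinal.{u} → Set (Set G)) : Prop :=
  ∀ α < k.ord,
    (S \ N α).Nonempty ∧ (S ∩ N α).Nonempty ∧
    (∀ E ∈ N α, ∃ F ∈ N α ∩ S, E ⊆ F) ∧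
    (∀ D : Set (Set G), D ⊆ S \ N α → D.PairwiseDisjoint id → Cardinal.mk D ≤ k)

/-- The smallest `G`-invariant `k`-additive algebra of subsets of `G`
containing the class `B`. -/
def genInvAlgebra {G : Type u} [Group G] (k : Cardinal.{u}) (B : Set (Set G)) : Set (Set G) :=
  {A | ∀ T : Set (Set G), B ⊆ T → IsSetAlgebra T → kAdditive k T → GInvariant T → A ∈ T}

/-- A `G`-invariant `k`-additive measurable structure (Definition 1.1):
`Sig` is an algebra, `I ⊆ Sig` is a proper ideal, both `k`-additive and `G`-invariant. -/
def MeasStructure {G : Type u} [Group G] (k : Cardinal.{u}) (Sig I : Set (Set G)) : Prop :=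
  IsSetAlgebra Sig ∧ kAdditive k Sig ∧ GInvariant Sig ∧
  I ⊆ Sig ∧ ∅ ∈ I ∧ (∀ A ∈ I, ∀ B, B ⊆ A → B ∈ I) ∧ (Set.univ : Set G) ∉ I ∧
  kAdditive k I ∧ GInvariant I


section Aux

variable {G : Type u} [Group G] {k : Cardinal.{u}} {N : Ordinal.{u} → Set (Set G)}

lemma ninf_empty_mem (hN : SmallSystem k N) : (∅ : Set G) ∈ NInf k N :=
  fun α hα => hN.empty_mem α hα

lemma ninf_downward (hN : SmallSystem k N) {A : Set G} (hA : A ∈ NInf k N)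
    {B : Set G} (hBA : B ⊆ A) : B ∈ NInf k N :=
  fun α hα => hN.downward α hα A (hA α hα) B hBA

lemma ninf_union (hN : SmallSystem k N) {A B : Set G} (hA : A ∈ NInf k N)
    (hB : B ∈ NInf k N) : A ∪ B ∈ NInf k N :=
  fun α hα => hN.union_ninf α hα A (hA α hα) B hB

lemma ninf_inv (hN : SmallSystem k N) : GInvariant (NInf k N) :=
  fun g A hA α hα => hN.invariant α hα g A (hA α hα)

lemma ninf_kAdditive (hk : Cardinal.aleph0 ≤ k) (hN : SmallSystem k N) :
    kAdditive k (NInf k N) := by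
  intro ι f hι hf α hα
  obtain ⟨αs, hααs, hαs, htail⟩ := hN.union_tail α hα
  set R : Set (Set G) := Set.range f with hRdef
  have hR : Cardinal.mk R ≤ Cardinal.mk (k.ord.ToType) := by
    rw [Cardinal.mk_toType, Cardinal.card_ord]
    exact Cardinal.mk_range_le.trans hι
  obtain ⟨e⟩ := (Cardinal.le_def _ _).mp hR
  set g : R → Ordinal.{u} :=
    fun A => αs + 1 + (((@Ordinal.ToType.mk k.ord)).symm (e A)).val with hgdef
  have hg_inj : Function.Injective g := by
    intro A B h
    have h2 := (add_left_cancel_iff (a := αs + 1)).mp h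
    have h3 : ((@Ordinal.ToType.mk k.ord)).symm (e A)
        = ((@Ordinal.ToType.mk k.ord)).symm (e B) := Subtype.ext h2
    exact e.injective (((@Ordinal.ToType.mk k.ord)).symm.injective h3)
  have hg_gt : ∀ A, αs < g A := by
    intro A
    have h1 : αs < αs + 1 := by rw [Ordinal.add_one_eq_succ]; exact Order.lt_succ αs
    exact h1.trans_le le_self_add
  have hg_lt : ∀ A, g A < k.ord := by
    intro A
    rw [Cardinal.lt_ord, hgdef]
    have hx : ((((@Ordinal.ToType.mk k.ord)).symm (e A)).val).card < k :=
      Cardinal.lt_ord.mp (((@Ordinal.ToType.mk k.ord)).symm (e A)).2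
    have hαs' : αs.card < k := Cardinal.lt_ord.mp hαs
    have h1 : (1 : Cardinal) < k := Cardinal.one_lt_aleph0.trans_le hk
    rw [Ordinal.card_add, Ordinal.card_add, Ordinal.card_one]
    exact Cardinal.add_lt_of_lt hk (Cardinal.add_lt_of_lt hk hαs' h1) hx
  set E : Ordinal.{u} → Set G :=
    Function.extend g (fun A => (A : Set G)) (fun _ => ∅) with hEdef
  have hE : ∀ A : R, E (g A) = (A : Set G) := fun A =>
    hg_inj.extend_apply (fun A => (A : Set G)) (fun _ => ∅) A
  have hmemR : ∀ A : R, (A : Set G) ∈ NInf k N := by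
    rintro ⟨A, i, rfl⟩
    exact hf i
  have hbig := htail (Set.range g) E ?_ ?_ ?_
  · have heq : (⋃ β ∈ Set.range g, E β) = ⋃ i, f i := by
      rw [Set.biUnion_range]
      have : (⋃ A : R, E (g A)) = ⋃ A : R, (A : Set G) := by
        exact iUnion_congr hE
      rw [this, ← Set.sUnion_eq_iUnion, hRdef, Set.sUnion_range]
    rwa [heq] at hbig
  · rintro β ⟨A, rfl⟩
    exact ⟨hg_gt A, hg_lt A⟩
  · rintro β₁ ⟨A₁, rfl⟩ β₂ ⟨A₂, rfl⟩ h
    rw [hE A₁, hE A₂] at h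
    exact congrArg g (Subtype.ext h)
  · rintro β ⟨A, rfl⟩
    rw [hE]
    exact hmemR A (g A) (hg_lt A)

/-- From some `N γ`, binary unions land in `N α`. -/
lemma exists_binary_union (hN : SmallSystem k N) {α : Ordinal.{u}} (hα : α < k.ord) :
    ∃ γ, γ < k.ord ∧ N γ ⊆ N α ∧ ∀ E ∈ N γ, ∀ F ∈ N γ, E ∪ F ∈ N α := by
  obtain ⟨αs, hααs, hαs, htail⟩ := hN.union_tail α hα
  obtain ⟨β₁, hβ1a, hβ1b, hβ1lt, hsub1α, hsub1s⟩ := hN.directed α hα αs hαs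
  obtain ⟨β₂, h12, -, hβ2lt, hsub21, -⟩ := hN.directed β₁ hβ1lt β₁ hβ1lt
  obtain ⟨γ, h2γ, -, hγlt, hsubγ2, -⟩ := hN.directed β₂ hβ2lt β₂ hβ2lt
  have hsubγ1 : N γ ⊆ N β₁ := fun E hE => hsub21 (hsubγ2 hE)
  have hsubγα : N γ ⊆ N α := fun E hE => hsub1α (hsubγ1 hE)
  refine ⟨γ, hγlt, hsubγα, fun E hE F hF => ?_⟩
  by_cases hEF : E = F
  · subst hEF
    rw [Set.union_self]
    exact hsubγα hE
  · have hne : β₂ ≠ β₁ := h12.ne'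
    have h := htail ({β₁, β₂} : Set Ordinal.{u}) (fun β => if β = β₁ then E else F) ?_ ?_ ?_
    · rw [Set.biUnion_pair] at h
      rwa [if_pos rfl, if_neg hne] at h
    · intro β hβ
      simp only [Set.mem_insert_iff, Set.mem_singleton_iff] at hβ
      rcases hβ with h | h
      · rw [h]; exact ⟨hβ1b, hβ1lt⟩
      · rw [h]; exact ⟨hβ1b.trans h12, hβ2lt⟩
    · intro x hx y hy hxy
      simp only [Set.mem_insert_iff, Set.mem_singleton_iff] at hx hy
      have hxy' : (if x = β₁ then E else F) = (if y = β₁ then E else F) := hxy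
      rcases hx with h1 | h1 <;> rcases hy with h2 | h2
      · rw [h1, h2]
      · rw [h1, if_pos rfl, h2, if_neg hne] at hxy'; exact absurd hxy' hEF
      · rw [h1, if_neg hne, h2, if_pos rfl] at hxy'; exact absurd hxy'.symm hEF
      · rw [h1, h2]
    · intro β hβ
      simp only [Set.mem_insert_iff, Set.mem_singleton_iff] at hβ
      show (if β = β₁ then E else F) ∈ N β
      rcases hβ with h | h
      · rw [if_pos h, h]; exact hsubγ1 hE
      · rw [h] at *
        rw [if_neg hne]; exact hsubγ2 hF

end Aux

section Main

variable {G : Type u} [Group G] {k : Cardinal.{u}} {N : Ordinal.{u} → Set (Set G)}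
  {S : Set (Set G)}

lemma gen_approx (hk : Cardinal.aleph0 ≤ k) (hN : SmallSystem k N) (hAlg : IsSetAlgebra S)
    (hkAdd : kAdditive k S) (hInv : GInvariant S) :
    genInvAlgebra k (S ∪ NInf k N) ⊆ {A | ∃ B ∈ S, (A \ B) ∪ (B \ A) ∈ NInf k N} := by
  intro A hA
  apply hA
  · rintro B (hB | hB)
    · exact ⟨B, hB, by simpa using ninf_empty_mem hN⟩
    · exact ⟨∅, hAlg.empty_mem, by simpa using hB⟩
  · refine ⟨⟨∅, hAlg.empty_mem, by simpa using ninf_empty_mem hN⟩, ?_, ?_⟩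
    · rintro A ⟨B, hB, hd⟩
      refine ⟨Bᶜ, hAlg.compl_mem B hB, ?_⟩
      have heq : (Aᶜ \ Bᶜ) ∪ (Bᶜ \ Aᶜ) = (A \ B) ∪ (B \ A) := by
        ext x; simp only [Set.mem_union, Set.mem_diff, Set.mem_compl_iff]; tauto
      rwa [heq]
    · rintro A ⟨B, hB, hd⟩ A' ⟨B', hB', hd'⟩
      refine ⟨B ∪ B', hAlg.union_mem B hB B' hB', ?_⟩
      refine ninf_downward hN (ninf_union hN hd hd') ?_
      intro x hx
      simp only [Set.mem_union, Set.mem_diff] at *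
      tauto
  · intro ι f hι hf
    choose B hB hd using hf
    refine ⟨⋃ i, B i, hkAdd ι B hι hB, ?_⟩
    refine ninf_downward hN
      (ninf_kAdditive hk hN ι (fun i => (f i \ B i) ∪ (B i \ f i)) hι hd) ?_
    rintro x (⟨h1, h2⟩ | ⟨h1, h2⟩)
    · obtain ⟨i, hi⟩ := Set.mem_iUnion.mp h1
      exact Set.mem_iUnion.mpr ⟨i, Or.inl ⟨hi, fun h => h2 (Set.mem_iUnion.mpr ⟨i, h⟩)⟩⟩
    · obtain ⟨i, hi⟩ := Set.mem_iUnion.mp h1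
      exact Set.mem_iUnion.mpr ⟨i, Or.inr ⟨hi, fun h => h2 (Set.mem_iUnion.mpr ⟨i, h⟩)⟩⟩
  · rintro g A ⟨B, hB, hd⟩
    refine ⟨g • B, hInv g B hB, ?_⟩
    have heq : (g • A \ g • B) ∪ (g • B \ g • A) = g • ((A \ B) ∪ (B \ A)) := by
      rw [smul_set_union, smul_set_sdiff, smul_set_sdiff]
    rw [heq]
    exact ninf_inv hN g _ hd

lemma sat_piece (hk : Cardinal.aleph0 ≤ k) (hN : SmallSystem k N) (hAlg : IsSetAlgebra S)
    (hkAdd : kAdditive k S) (hInv : GInvariant S) (hAdm : Admissible k S N)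
    {D : Set (Set G)} (hD : D ⊆ genInvAlgebra k (S ∪ NInf k N) \ NInf k N)
    (hPD : D.PairwiseDisjoint id) {α : Ordinal.{u}} (hα : α < k.ord) :
    Cardinal.mk ({A ∈ D | A ∉ N α} : Set (Set G)) ≤ k := by
  obtain ⟨γ, hγ, hγα, hunion⟩ := exists_binary_union hN hα
  set Dα : Set (Set G) := {A ∈ D | A ∉ N α} with hDα
  have key : ∀ A ∈ Dα, ∃ C, C ∈ S ∧ C ∉ N γ ∧ C ⊆ A := by
    intro A hA
    obtain ⟨B, hB, hd⟩ := gen_approx hk hN hAlg hkAdd hInv (hD hA.1).1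
    obtain ⟨F, hF, hsub⟩ := (hAdm γ hγ).2.2.1 _ (hd γ hγ)
    refine ⟨B \ F, ?_, ?_, ?_⟩
    · have heq : B \ F = (Bᶜ ∪ F)ᶜ := by
        ext x; simp only [Set.mem_diff, Set.mem_compl_iff, Set.mem_union]; tauto
      rw [heq]
      exact hAlg.compl_mem _ (hAlg.union_mem _ (hAlg.compl_mem B hB) F hF.2)
    · intro hBF
      have hAsub : A ⊆ (B \ F) ∪ F := by
        intro x hx
        by_cases hxB : x ∈ B
        · by_cases hxF : x ∈ F
          · exact Or.inr hxF
          · exact Or.inl ⟨hxB, hxF⟩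
        · exact Or.inr (hsub (Or.inl ⟨hx, hxB⟩))
      exact hA.2 (hN.downward α hα _ (hunion _ hBF _ hF.1) A hAsub)
    · rintro x ⟨hxB, hxF⟩
      by_contra hxA
      exact hxF (hsub (Or.inr ⟨hxB, hxA⟩))
  choose! φ hφS hφN hφA using key
  have hinj : Set.InjOn φ Dα := by
    intro A hA A' hA' h
    by_contra hne
    have hdis := hPD hA.1 hA'.1 hne
    have hempty : φ A ⊆ (∅ : Set G) := by
      intro x hx
      exact absurd (hφA A' hA' (h ▸ hx)) (Set.disjoint_left.mp hdis (hφA A hA hx))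
    exact hφN A hA (hN.downward γ hγ ∅ (hN.empty_mem γ hγ) _ hempty)
  have himg : φ '' Dα ⊆ S \ N γ := by
    rintro _ ⟨A, hA, rfl⟩
    exact ⟨hφS A hA, hφN A hA⟩
  have hpd : (φ '' Dα).PairwiseDisjoint id := by
    rintro _ ⟨A, hA, rfl⟩ _ ⟨A', hA', rfl⟩ hne
    have hAA' : A ≠ A' := by rintro rfl; exact hne rfl
    exact (hPD hA.1 hA'.1 hAA').mono (hφA A hA) (hφA A' hA')
  have hle := (hAdm γ hγ).2.2.2 _ himg hpd
  rwa [Cardinal.mk_image_eq_of_injOn φ Dα hinj] at hle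

end Main

/-- Theorem 1.4: if `S` is admissible with respect to the `k`-small system `N`, then
`(S̃, N_∞)` is a `G`-invariant `k`-additive measurable structure which is `k⁺`-saturated. -/
theorem measStructure_saturated_of_admissible {G : Type u} [Group G] (k : Cardinal.{u})
    (hk : Cardinal.aleph0 ≤ k) (N : Ordinal.{u} → Set (Set G)) (hN : SmallSystem k N)
    (S : Set (Set G)) (hAlg : IsSetAlgebra S) (hkAdd : kAdditive k S)
    (hInv : GInvariant S) (hAdm : Admissible k S N) :
    MeasStructure k (genInvAlgebra k (S ∪ NInf k N)) (NInf k N) ∧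
      ∀ D : Set (Set G), D ⊆ genInvAlgebra k (S ∪ NInf k N) \ NInf k N →
        D.PairwiseDisjoint id → Cardinal.mk D ≤ k := by
  have h0 : (0 : Ordinal.{u}) < k.ord := by
    rw [Cardinal.lt_ord, Ordinal.card_zero]
    exact Cardinal.aleph0_pos.trans_le hk
  refine ⟨⟨?_, ?_, ?_, ?_, ninf_empty_mem hN, ?_, ?_, ninf_kAdditive hk hN, ninf_inv hN⟩, ?_⟩
  · exact ⟨fun T hT ha _ _ => ha.empty_mem,
      fun A hA T hT ha hb hc => ha.compl_mem A (hA T hT ha hb hc),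
      fun A hA B hB T hT ha hb hc => ha.union_mem A (hA T hT ha hb hc) B (hB T hT ha hb hc)⟩
  · intro ι f hι hf T hT ha hb hc
    exact hb ι f hι fun i => hf i T hT ha hb hc
  · intro g A hA T hT ha hb hc
    exact hc g A (hA T hT ha hb hc)
  · intro E hE T hT _ _ _
    exact hT (Or.inr hE)
  · exact fun A hA B hBA => ninf_downward hN hA hBA
  · intro h
    obtain ⟨A, hAS, hAN⟩ := (hAdm 0 h0).1
    exact hAN (hN.downward 0 h0 Set.univ (h 0 h0) A (Set.subset_univ A))
  · intro D hD hPD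
    haveI : Nonempty k.ord.ToType := by
      rw [← Cardinal.mk_ne_zero_iff, Cardinal.mk_toType, Cardinal.card_ord]
      exact (Cardinal.aleph0_pos.trans_le hk).ne'
    have hcover : D ⊆ ⋃ i : k.ord.ToType,
        {A ∈ D | A ∉ N ((((@Ordinal.ToType.mk k.ord)).symm i).val)} := by
      intro A hA
      have hAn : A ∉ NInf k N := (hD hA).2
      have hex : ∃ β, β < k.ord ∧ A ∉ N β := by
        by_contra hcon
        push_neg at hcon
        exact hAn fun β hβ => hcon β hβ
      obtain ⟨β, hβ, hAβ⟩ := hex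
      refine Set.mem_iUnion.mpr ⟨(@Ordinal.ToType.mk k.ord) ⟨β, hβ⟩, hA, ?_⟩
      rw [OrderIso.symm_apply_apply]
      exact hAβ
    calc Cardinal.mk D ≤ _ := Cardinal.mk_le_mk_of_subset hcover
      _ ≤ Cardinal.mk k.ord.ToType * ⨆ i : k.ord.ToType,
            Cardinal.mk ({A ∈ D | A ∉ N ((((@Ordinal.ToType.mk k.ord)).symm i).val)} :
              Set (Set G)) := Cardinal.mk_iUnion_le _
      _ ≤ k * k := mul_le_mul' (by rw [Cardinal.mk_toType, Cardinal.card_ord])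
            (ciSup_le' fun i => sat_piece hk hN hAlg hkAdd hInv hAdm hD hPD
              (((@Ordinal.ToType.mk k.ord)).symm i).2)
      _ = k := Cardinal.mul_eq_self hk
end

section
/- Let G be a group, k an infinite cardinal, and {N_α}_{α<k} a G-invariant k-small system on G. Then N_∞ = ⋂_{α<k} N_α is a G-invariant k-additive ideal of subsets of G; that is, N_∞ contains the empty set, is downward closed under inclusion, is closed under unions of at most k of its members, and satisfies gA ∈ N_∞ for every g ∈ G and A ∈ N_∞. -/
open Set Pointwise

universe u

/-- `N_∞ = ⋂_{α<k} N_α` is a `G`-invariant `k`-additive ideal of subsets of `G`. -/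
theorem nInf_isInvariantIdeal {G : Type u} [Group G] (k : Cardinal.{u})
    (hk : Cardinal.aleph0 ≤ k) (N : Ordinal.{u} → Set (Set G)) (hN : SmallSystem k N) :
    (∅ : Set G) ∈ NInf k N ∧
    (∀ A ∈ NInf k N, ∀ B, B ⊆ A → B ∈ NInf k N) ∧
    kAdditive k (NInf k N) ∧
    GInvariant (NInf k N) := by
  refine ⟨fun α hα => hN.empty_mem α hα,
    fun A hA B hB α hα => hN.downward α hα A (hA α hα) B hB, ?_, ?_⟩
  · -- k-additivity
    intro ι f hι hf α hα
    obtain ⟨αs, hααs, hαs, htail⟩ := hN.union_tail α hα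
    set S : Set (Set G) := Set.range f with hS
    have hmkS : Cardinal.mk S ≤ k := le_trans Cardinal.mk_range_le hι
    have hmkS' : Cardinal.mk S ≤ Cardinal.mk k.ord.ToType := by
      rwa [Cardinal.mk_toType, Cardinal.card_ord]
    obtain ⟨e⟩ := Cardinal.le_def _ _ |>.mp hmkS'
    set g : S → Ordinal.{u} :=
      fun s => αs + 1 + ((Ordinal.ToType.mk (o := k.ord)).symm (e s)).val with hg
    have hginj : Function.Injective g := by
      intro s t hst
      have h1 := (add_left_cancel_iff (a := αs + 1)).mp hst
      exact e.injective ((Ordinal.ToType.mk (o := k.ord)).symm.injective (Subtype.ext h1))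
    have hgas : ∀ s, αs < g s := fun s =>
      lt_of_lt_of_le (Order.lt_add_one_iff.mpr le_rfl) le_self_add
    have hglt : ∀ s, g s < k.ord := by
      intro s
      have hβ : ((Ordinal.ToType.mk (o := k.ord)).symm (e s)).val < k.ord :=
        ((Ordinal.ToType.mk (o := k.ord)).symm (e s)).2
      rw [Cardinal.lt_ord, Ordinal.card_add, Ordinal.card_add]
      exact Cardinal.add_lt_of_lt hk
        (Cardinal.add_lt_of_lt hk (Cardinal.lt_ord.mp hαs)
          (lt_of_lt_of_le (by simp) hk))
        (Cardinal.lt_ord.mp hβ)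
    classical
    set E : Ordinal.{u} → Set G :=
      fun β => if h : ∃ s : S, g s = β then (h.choose : Set G) else ∅ with hE
    have hEg : ∀ s : S, E (g s) = (s : Set G) := by
      intro s
      have h : ∃ t : S, g t = g s := ⟨s, rfl⟩
      simp only [hE, dif_pos h]
      exact congrArg _ (hginj h.choose_spec)
    set T : Set Ordinal.{u} := Set.range g with hT
    have hTmem : ∀ β ∈ T, αs < β ∧ β < k.ord := by
      rintro β ⟨s, rfl⟩; exact ⟨hgas s, hglt s⟩
    have hInj : Set.InjOn E T := by
      rintro β1 ⟨s1, rfl⟩ β2 ⟨s2, rfl⟩ h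
      rw [hEg s1, hEg s2] at h
      exact congrArg g (Subtype.ext h)
    have hmem : ∀ β ∈ T, E β ∈ N β := by
      rintro β ⟨s, rfl⟩
      rw [hEg s]
      obtain ⟨i, hi⟩ := s.2
      exact hi ▸ hf i (g s) (hglt s)
    have hU := htail T E hTmem hInj hmem
    refine hN.downward α hα _ hU _ ?_
    intro x hx
    obtain ⟨i, hxi⟩ := Set.mem_iUnion.mp hx
    have hsi : (f i : Set G) ∈ S := ⟨i, rfl⟩
    refine Set.mem_biUnion (Set.mem_range_self (⟨f i, hsi⟩ : S)) ?_
    rw [hEg ⟨f i, hsi⟩]; exact hxi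
  · intro gg A hA α hα
    exact hN.invariant α hα gg A (hA α hα)
end

section
/- Let G be a group, H a normal subgroup of G, Γ = G/H the quotient group, and f : G → Γ the canonical homomorphism. Let k be an infinite cardinal and let {N_α}_{α<k} be a G-invariant k-small system on G. For each α<k define N'_α = {Y ⊆ Γ : f⁻¹(Y) ∈ N_α}. Then {N'_α}_{α<k} is a Γ-invariant k-small system on Γ. -/
open Set Pointwise

universe u

/-- If `{N_α}_{α<k}` is a `G`-invariant `k`-small system on `G`, then
`N'_α = {Y ⊆ G/H : f⁻¹(Y) ∈ N_α}` (with `f : G → G/H` canonical) is a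
`G/H`-invariant `k`-small system on the quotient group `G/H`. -/
theorem quotient_smallSystem {G : Type u} [Group G] (H : Subgroup G) [H.Normal]
    (k : Cardinal.{u}) (hk : Cardinal.aleph0 ≤ k)
    (N : Ordinal.{u} → Set (Set G)) (hN : SmallSystem k N) :
    SmallSystem k
      (fun α => {Y : Set (G ⧸ H) | (QuotientGroup.mk : G → G ⧸ H) ⁻¹' Y ∈ N α}) := by
  set f : G → G ⧸ H := QuotientGroup.mk with hf
  have hsurj : Function.Surjective f := QuotientGroup.mk_surjective
  have hemp : f ⁻¹' (∅ : Set (G ⧸ H)) = ∅ := Set.preimage_empty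
  constructor
  · intro α hα
    exact ⟨∅, by simpa [hemp] using hN.empty_mem α hα⟩
  · intro α hα
    simpa [hemp] using hN.empty_mem α hα
  · intro α hα g Y hY
    obtain ⟨x, rfl⟩ := hsurj g
    have key : f ⁻¹' ((f x) • Y) = x • (f ⁻¹' Y) := by
      ext a
      simp only [Set.mem_preimage, Set.mem_smul_set_iff_inv_smul_mem, smul_eq_mul]
      constructor
      · intro h; simpa [hf] using h
      · intro h; simpa [hf] using h
    show f ⁻¹' ((f x) • Y) ∈ N α
    rw [key]
    exact hN.invariant α hα x _ hY
  · intro α hα E hE F hF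
    exact hN.downward α hα _ hE _ (Set.preimage_mono hF)
  · intro α hα E hE F hF
    have : f ⁻¹' E ∪ f ⁻¹' F ∈ N α := by
      refine hN.union_ninf α hα _ hE _ ?_
      intro β hβ
      exact hF β hβ
    simpa [Set.preimage_union] using this
  · intro α hα
    obtain ⟨αs, h1, h2, h3⟩ := hN.union_tail α hα
    refine ⟨αs, h1, h2, ?_⟩
    intro T E hT hinj hE
    have : (⋃ β ∈ T, f ⁻¹' (E β)) ∈ N α := by
      refine h3 T (fun β => f ⁻¹' (E β)) hT ?_ hE
      intro a ha b hb hab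
      exact hinj ha hb ((Set.preimage_injective.mpr hsurj) hab)
    simpa [Set.preimage_iUnion] using this
  · intro α hα β hβ
    obtain ⟨γ, h1, h2, h3, h4, h5⟩ := hN.directed α hα β hβ
    exact ⟨γ, h1, h2, h3, fun Y hY => h4 hY, fun Y hY => h5 hY⟩
end
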